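/- Let N be a finite-dimensional linear subspace of E = ℝ^n × W which is in good position to C and such that C ∩ N is a closed convex cone. If a ∈ C ∩ N is nonzero and generates an extreme ray [0,∞)·a of C ∩ N, then dim N − 1 = #σ_a. (Second part of Lemma 5.6.) -/

import Mathlib

open Pointwise

/-!
Let `σ = σ_a` and let `φ : N → ℝ^σ` read off the coordinates in `σ`. Rank–nullity gives the
theorem once `ker φ = ℝ a` and `φ` is onto. If `v ∈ N` vanishes on `σ`, then `a ± t v ∈ C ∩ N`
for small `t > 0`, and extremality of `a` forces `v ∈ ℝ a`. For surjectivity, good position lets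
`a` absorb every small `m ∈ N⊥` and `-m` without leaving `C`; as `a` vanishes on `σ`, so does
`m`. Hence `ℝ^σ = φ(N) + (coordinates of N⊥ on σ) = φ(N)`.
-/

section

open Filter Topology Submodule

variable {ι W : Type*}

def partialQuadrant (ι W : Type*) : Set ((ι → ℝ) × W) := {p | ∀ i, 0 ≤ p.1 i}

theorem smul_mem_partialQuadrant [SMul ℝ W] {p : (ι → ℝ) × W} (hp : p ∈ partialQuadrant ι W)
    {t : ℝ} (ht : 0 ≤ t) : t • p ∈ partialQuadrant ι W :=
  fun i => mul_nonneg ht (hp i)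

theorem exists_pos_forall_abs_mul_le [Finite ι] {a v : ι → ℝ} (ha : ∀ i, 0 ≤ a i)
    (hv : ∀ i, a i = 0 → v i = 0) : ∃ t > 0, ∀ i, |t * v i| ≤ a i := by
  have hsmall : ∀ i, ∀ᶠ t in 𝓝[>] (0 : ℝ), |t * v i| ≤ a i := by
    intro i
    rcases (ha i).eq_or_lt with hai | hai
    · exact Eventually.of_forall fun t => by simp [hv i hai.symm, ← hai]
    · refine eventually_nhdsWithin_of_eventually_nhds ?_
      have hcont : ContinuousAt (fun t : ℝ => |t * v i|) 0 := by fun_prop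
      exact (hcont.eventually_lt continuousAt_const (by simpa using hai)).mono fun _ => le_of_lt
  obtain ⟨t, ht, ht0⟩ := ((eventually_all.2 hsmall).and self_mem_nhdsWithin).exists
  exact ⟨t, ht0, ht⟩

theorem mem_span_singleton_of_add_mem_of_sub_mem {E : Type*} [AddCommGroup E] [Module ℝ E]
    {K : Set E} (hK : ∀ x ∈ K, ∀ t : ℝ, 0 < t → t • x ∈ K) {a v : E}
    (ha : ∀ y ∈ K, a - y ∈ K → ∃ t : ℝ, y = t • a) (hadd : a + v ∈ K) (hsub : a - v ∈ K) :
    v ∈ ℝ ∙ a := by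
  have hhalf : a - (2⁻¹ : ℝ) • (a + v) = (2⁻¹ : ℝ) • (a - v) := by module
  obtain ⟨t, ht⟩ := ha _ (hK _ hadd _ (by norm_num)) (hhalf ▸ hK _ hsub _ (by norm_num))
  exact mem_span_singleton.2 ⟨2 * t - 1, by linear_combination (norm := module) (-2 : ℝ) • ht⟩

theorem range_domRestrict_eq_top_of_sup_eq_top {E F : Type*} [AddCommGroup E] [Module ℝ E]
    [AddCommGroup F] [Module ℝ F] {f : E →ₗ[ℝ] F} (hf : Function.Surjective f)
    {N M : Submodule ℝ E} (hNM : N ⊔ M = ⊤) (hM : M ≤ LinearMap.ker f) :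
    LinearMap.range (f.domRestrict N) = ⊤ := by
  rw [LinearMap.range_domRestrict, ← sup_bot_eq (N.map f), ← LinearMap.le_ker_iff_map.1 hM,
    ← Submodule.map_sup, hNM, Submodule.map_top, LinearMap.range_eq_top.2 hf]

section Coordinates

variable [AddCommGroup W] [Module ℝ W]

def coordRestrict (s : Set ι) : (ι → ℝ) × W →ₗ[ℝ] (s → ℝ) :=
  LinearMap.funLeft ℝ ℝ ((↑) : s → ι) ∘ₗ LinearMap.fst ℝ (ι → ℝ) W

theorem coordRestrict_surjective (s : Set ι) :
    Function.Surjective (coordRestrict (W := W) s) :=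
  (LinearMap.funLeft_surjective_of_injective ℝ ℝ _ Subtype.val_injective).comp
    (LinearMap.fst_surjective (R := ℝ) (M₂ := W))

theorem mem_span_singleton_of_extreme {N : Submodule ℝ ((ι → ℝ) × W)} [Finite ι]
    {a v : (ι → ℝ) × W} (haC : a ∈ partialQuadrant ι W) (haN : a ∈ N)
    (hextreme : ∀ y ∈ partialQuadrant ι W ∩ N, a - y ∈ partialQuadrant ι W ∩ N →
      ∃ t : ℝ, y = t • a)
    (hvN : v ∈ N) (hv : ∀ i, a.1 i = 0 → v.1 i = 0) : v ∈ ℝ ∙ a := by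
  obtain ⟨t, ht0, ht⟩ := exists_pos_forall_abs_mul_le haC hv
  have hcone : ∀ x ∈ partialQuadrant ι W ∩ N, ∀ s : ℝ, 0 < s →
      s • x ∈ partialQuadrant ι W ∩ N :=
    fun x hx s hs => ⟨smul_mem_partialQuadrant hx.1 hs.le, N.smul_mem s hx.2⟩
  have hadd : a + t • v ∈ partialQuadrant ι W ∩ N := by
    refine ⟨fun i => ?_, N.add_mem haN (N.smul_mem t hvN)⟩
    simp only [Prod.fst_add, Prod.smul_fst, Pi.add_apply, Pi.smul_apply, smul_eq_mul]
    linarith [(abs_le.1 (ht i)).1]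
  have hsub : a - t • v ∈ partialQuadrant ι W ∩ N := by
    refine ⟨fun i => ?_, N.sub_mem haN (N.smul_mem t hvN)⟩
    simp only [Prod.fst_sub, Prod.smul_fst, Pi.sub_apply, Pi.smul_apply, smul_eq_mul]
    linarith [(abs_le.1 (ht i)).2]
  exact (smul_mem_iff _ ht0.ne').1
    (mem_span_singleton_of_add_mem_of_sub_mem hcone hextreme hadd hsub)

theorem ker_coordRestrict_domRestrict_eq_span {N : Submodule ℝ ((ι → ℝ) × W)} [Finite ι]
    {a : (ι → ℝ) × W} (haC : a ∈ partialQuadrant ι W) (haN : a ∈ N)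
    (hextreme : ∀ y ∈ partialQuadrant ι W ∩ N, a - y ∈ partialQuadrant ι W ∩ N →
      ∃ t : ℝ, y = t • a) :
    LinearMap.ker ((coordRestrict {i | a.1 i = 0}).domRestrict N) = ℝ ∙ ⟨a, haN⟩ := by
  apply le_antisymm
  · rintro ⟨v, hvN⟩ hv
    obtain ⟨r, hr⟩ := mem_span_singleton.1 <| mem_span_singleton_of_extreme haC haN hextreme hvN
      fun i hi => congrFun hv ⟨i, hi⟩
    exact mem_span_singleton.2 ⟨r, Subtype.ext hr⟩
  · exact (span_singleton_le_iff_mem _ _).2 <| funext fun i => i.2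

end Coordinates

theorem fst_apply_eq_zero_of_add_mem_partialQuadrant [Fintype ι] [NormedAddCommGroup W]
    [NormedSpace ℝ W] {M : Submodule ℝ ((ι → ℝ) × W)} {v : (ι → ℝ) × W} {r : ℝ} (hr : 0 < r)
    (hv : ∀ m ∈ M, ‖m‖ ≤ r → v + m ∈ partialQuadrant ι W) {i : ι} (hi : v.1 i = 0)
    {m : (ι → ℝ) × W} (hm : m ∈ M) : m.1 i = 0 := by
  rcases eq_or_ne m 0 with rfl | hm0
  · rfl
  set s := r / ‖m‖
  have hs : 0 < s := div_pos hr (norm_pos_iff.2 hm0)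
  have hnorm : ∀ t : ℝ, |t| = s → ‖t • m‖ ≤ r := fun t ht => by
    rw [norm_smul, Real.norm_eq_abs, ht, div_mul_cancel₀ _ (norm_ne_zero_iff.2 hm0)]
  have hpos := hv _ (M.smul_mem s hm) (hnorm s (abs_of_pos hs)) i
  have hneg := hv _ (M.smul_mem (-s) hm) (hnorm (-s) (by rw [abs_neg, abs_of_pos hs])) i
  simp only [Prod.fst_add, Prod.smul_fst, Pi.add_apply, Pi.smul_apply, smul_eq_mul, hi,
    zero_add, neg_mul] at hpos hneg
  exact (mul_eq_zero.1 (le_antisymm (by linarith) hpos)).resolve_left hs.ne'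

end

theorem extreme_ray_dim_eq_general
    (n : ℕ) (W : Type*) [NormedAddCommGroup W] [NormedSpace ℝ W]
    (C : Set ((Fin n → ℝ) × W)) (hC : C = {p : (Fin n → ℝ) × W | ∀ i : Fin n, 0 ≤ p.1 i})
    (N : Submodule ℝ ((Fin n → ℝ) × W)) [FiniteDimensional ℝ N]
    -- … together with a good complement N⊥ and constant c
    (Nperp : Submodule ℝ ((Fin n → ℝ) × W))
    (hcompl : IsCompl N Nperp)
    (c : ℝ) (hc : 0 < c)
    (hgood : ∀ v ∈ N, ∀ m ∈ Nperp, ‖m‖ ≤ c * ‖v‖ → ((v + m ∈ C) ↔ v ∈ C))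
    (a : (Fin n → ℝ) × W) (haC : a ∈ C) (haN : a ∈ N) (ha0 : a ≠ 0)
    -- a generates an extreme ray of C ∩ N
    (hextreme : ∀ y, y ∈ C → y ∈ N → a - y ∈ C → a - y ∈ N →
      ∃ t : ℝ, 0 ≤ t ∧ y = t • a) :
    Module.finrank ℝ N - 1 = Set.ncard {i : Fin n | a.1 i = 0} := by
  classical
  obtain rfl : C = partialQuadrant (Fin n) W := hC
  set φ := (coordRestrict (W := W) {i | a.1 i = 0}).domRestrict N
  have hker : LinearMap.ker φ = ℝ ∙ ⟨a, haN⟩ :=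
    ker_coordRestrict_domRestrict_eq_span haC haN fun y hy hay =>
      (hextreme y hy.1 hy.2 hay.1 hay.2).imp fun _ ht => ht.2
  have hperp : Nperp ≤ LinearMap.ker (coordRestrict {i | a.1 i = 0}) := fun m hm =>
    funext fun i => fst_apply_eq_zero_of_add_mem_partialQuadrant
      (mul_pos hc (norm_pos_iff.2 ha0)) (fun m hm hnorm => (hgood a haN m hm hnorm).2 haC) i.2 hm
  have hrange : LinearMap.range φ = ⊤ :=
    range_domRestrict_eq_top_of_sup_eq_top (coordRestrict_surjective _) hcompl.sup_eq_top hperp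
  have hrank := φ.finrank_range_add_finrank_ker
  rw [hrange, hker, finrank_top, Module.finrank_fintype_fun_eq_card,
    finrank_span_singleton (Subtype.coe_ne_coe.1 ha0), ← Nat.card_eq_fintype_card,
    Nat.card_coe_set_eq] at hrank
  omega

/-- second part of Lemma 5.6: if in addition `N` is in good position to
the partial quadrant `C`, then `dim N − 1 = #σ_a` for every nonzero `a ∈ C ∩ N` generating
an extreme ray of `C ∩ N`. -/
theorem extreme_ray_dim_eq
    (n : ℕ) (W : Type*) [NormedAddCommGroup W] [NormedSpace ℝ W]
    (C : Set ((Fin n → ℝ) × W)) (hC : C = {p : (Fin n → ℝ) × W | ∀ i : Fin n, 0 ≤ p.1 i})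
    (N : Submodule ℝ ((Fin n → ℝ) × W)) [FiniteDimensional ℝ N]
    -- N is in good position to C: nonempty interior of N ∩ C in N …
    (hint : ∃ x, x ∈ N ∧ x ∈ C ∧ ∃ ε > 0, ∀ y ∈ N, ‖y - x‖ < ε → y ∈ C)
    -- … together with a good complement N⊥ and constant c
    (Nperp : Submodule ℝ ((Fin n → ℝ) × W))
    (hclosed : IsClosed (Nperp : Set ((Fin n → ℝ) × W)))
    (hcompl : IsCompl N Nperp)
    (c : ℝ) (hc : 0 < c)
    (hgood : ∀ v ∈ N, ∀ m ∈ Nperp, ‖m‖ ≤ c * ‖v‖ → ((v + m ∈ C) ↔ v ∈ C))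
    -- C ∩ N is a closed convex cone; the nontrivial requirement is pointedness
    (hpointed : (C ∩ (N : Set ((Fin n → ℝ) × W))) ∩ (-(C ∩ (N : Set ((Fin n → ℝ) × W)))) = {0})
    (a : (Fin n → ℝ) × W) (haC : a ∈ C) (haN : a ∈ N) (ha0 : a ≠ 0)
    -- a generates an extreme ray of C ∩ N
    (hextreme : ∀ y, y ∈ C → y ∈ N → a - y ∈ C → a - y ∈ N →
      ∃ t : ℝ, 0 ≤ t ∧ y = t • a) :
    Module.finrank ℝ N - 1 = Set.ncard {i : Fin n | a.1 i = 0} :=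
  extreme_ray_dim_eq_general n W C hC N Nperp hcompl c hc hgood a haC haN ha0 hextreme
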